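/- arXiv:1601.03906 — 5 statements merged into one kernel-verified Lean document; each statement's English description precedes it below -/
import Mathlib

section
/- If f: [0,1] → ℝ is convex, then for every m ≥ 1 its Bernstein approximation B_m(f, t) = Σ_{k=0}^m f(k/m) b_{k,m}(t) is convex on [0,1]. -/
/-- Bernstein basis polynomial `b_{k,m}(x) = C(m,k) x^k (1-x)^{m-k}`. -/
noncomputable def bern (m k : ℕ) (x : ℝ) : ℝ := (m.choose k : ℝ) * x ^ k * (1 - x) ^ (m - k)

/-- The `m`-th Bernstein approximation of `f`. -/
noncomputable def bernApprox (f : ℝ → ℝ) (m : ℕ) (t : ℝ) : ℝ :=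
  ∑ k ∈ Finset.range (m + 1), f ((k : ℝ) / (m : ℝ)) * bern m k t

/-!
The Bernstein approximation is a polynomial, and differentiating a Bernstein combination
`∑ a_k b_{n+1,k}` gives `(n + 1) ∑ (Δa)_k b_{n,k}`. Hence the second derivative of `B_m f` is
`m (m - 1) ∑ (Δ²a)_k b_{m-2,k}` with `a_k = f (k / m)`. Convexity of `f` makes the second
differences `Δ²a` nonnegative and the basis polynomials are nonnegative on `[0, 1]`, so this
second derivative is nonnegative there.
-/

open Polynomial Finset fwdDiff

section CommRing

variable {R : Type*} [CommRing R]

noncomputable def bernsteinCombination (n : ℕ) (a : ℕ → R) : R[X] :=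
  ∑ k ∈ range (n + 1), C (a k) * bernsteinPolynomial R n k

theorem derivative_bernsteinCombination_zero (a : ℕ → R) :
    derivative (bernsteinCombination 0 a) = 0 := by
  simp [bernsteinCombination, bernsteinPolynomial]

theorem derivative_bernsteinCombination_succ (n : ℕ) (a : ℕ → R) :
    derivative (bernsteinCombination (n + 1) a) =
      ((n + 1 : ℕ) : R[X]) * bernsteinCombination n (Δ_[1] a) := by
  push_cast
  have extend : ∑ k ∈ range (n + 2), C (a k) * bernsteinPolynomial R n k =
      bernsteinCombination n a := by
    rw [sum_range_succ, bernsteinPolynomial.eq_zero_of_lt R n.lt_succ_self, mul_zero, add_zero,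
      bernsteinCombination]
  calc derivative (bernsteinCombination (n + 1) a)
      = ∑ k ∈ range (n + 1), (n + 1 : R[X]) * (C (a (k + 1)) *
            (bernsteinPolynomial R n k - bernsteinPolynomial R n (k + 1))) +
          (n + 1 : R[X]) * -(C (a 0) * bernsteinPolynomial R n 0) := by
        rw [bernsteinCombination, derivative_sum, sum_range_succ']
        simp only [derivative_C_mul, bernsteinPolynomial.derivative_zero,
          bernsteinPolynomial.derivative_succ, add_tsub_cancel_right]
        push_cast
        congr 1
        · exact sum_congr rfl fun _ _ => by ring
        · ring
    _ = (n + 1 : R[X]) * (∑ k ∈ range (n + 1), C (a (k + 1)) * bernsteinPolynomial R n k -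
          ∑ k ∈ range (n + 2), C (a k) * bernsteinPolynomial R n k) := by
        rw [← mul_sum, ← mul_add, sum_range_succ' _ (n + 1)]
        simp only [mul_sub, sum_sub_distrib]
        ring
    _ = (n + 1 : R[X]) * bernsteinCombination n (Δ_[1] a) := by
        simp only [extend, bernsteinCombination, fwdDiff, C_sub, sub_mul, sum_sub_distrib]

end CommRing

theorem eval_bernsteinCombination_nonneg {n : ℕ} {a : ℕ → ℝ} (ha : ∀ k ≤ n, 0 ≤ a k)
    {x : ℝ} (hx : x ∈ Set.Icc (0 : ℝ) 1) : 0 ≤ (bernsteinCombination n a).eval x := by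
  rw [bernsteinCombination, eval_finsetSum]
  refine sum_nonneg fun k hk => ?_
  rw [eval_mul, eval_C]
  exact mul_nonneg (ha k (Nat.lt_succ_iff.mp (mem_range.mp hk))) (bernstein_nonneg (x := ⟨x, hx⟩))

theorem Polynomial.convexOn_eval_of_eval_derivative_derivative_nonneg (P : ℝ[X]) {D : Set ℝ}
    (hD : Convex ℝ D) (hP : ∀ x ∈ interior D, 0 ≤ (derivative (derivative P)).eval x) :
    ConvexOn ℝ D fun x => P.eval x :=
  convexOn_of_hasDerivWithinAt2_nonneg hD P.continuous.continuousOn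
    (fun x _ => P.hasDerivWithinAt x _) (fun x _ => (derivative P).hasDerivWithinAt x _) hP

theorem convexOn_eval_bernsteinCombination {n : ℕ} {a : ℕ → ℝ}
    (ha : ∀ k, k + 2 ≤ n → 0 ≤ Δ_[1] (Δ_[1] a) k) :
    ConvexOn ℝ (Set.Icc 0 1) fun x => (bernsteinCombination n a).eval x := by
  refine (bernsteinCombination n a).convexOn_eval_of_eval_derivative_derivative_nonneg
    (convex_Icc 0 1) fun x hx => ?_
  rcases n with _ | _ | n
  · simp [derivative_bernsteinCombination_zero]
  · simp [derivative_bernsteinCombination_succ, derivative_bernsteinCombination_zero]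
  · rw [derivative_bernsteinCombination_succ, derivative_natCast_mul,
      derivative_bernsteinCombination_succ]
    have := eval_bernsteinCombination_nonneg (n := n) (fun k hk => ha k (by omega))
      (interior_subset hx : x ∈ Set.Icc (0 : ℝ) 1)
    simp only [eval_mul, eval_natCast]
    positivity

theorem ConvexOn.fwdDiff_fwdDiff_nonneg {E : Type*} [AddCommGroup E] [Module ℝ E] {s : Set E}
    {f : E → ℝ} (hf : ConvexOn ℝ s f) {x h : E} (hx : x ∈ s) (hxh : x + h + h ∈ s) :
    0 ≤ Δ_[h] (Δ_[h] f) x := by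
  have hmid := hf.2 hx hxh (by norm_num : (0 : ℝ) ≤ 1 / 2) (by norm_num : (0 : ℝ) ≤ 1 / 2)
    (by norm_num)
  have : (1 / 2 : ℝ) • x + (1 / 2 : ℝ) • (x + h + h) = x + h := by module
  rw [this, smul_eq_mul, smul_eq_mul] at hmid
  simp only [fwdDiff]
  linarith

theorem ConvexOn.fwdDiff_fwdDiff_comp_div_nonneg {f : ℝ → ℝ}
    (hf : ConvexOn ℝ (Set.Icc 0 1) f) {m k : ℕ} (hk : k + 2 ≤ m) :
    0 ≤ Δ_[1] (Δ_[1] fun j : ℕ => f (j / m)) k := by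
  have hm : (0 : ℝ) < m := by exact_mod_cast (by omega : 0 < m)
  have hk' : (k : ℝ) + 2 ≤ m := by exact_mod_cast hk
  have key := hf.fwdDiff_fwdDiff_nonneg (x := k / m) (h := 1 / m)
    ⟨by positivity, by rw [div_le_one hm]; linarith⟩
    ⟨by positivity, by rw [← add_div, ← add_div, div_le_one hm]; linarith⟩
  convert key using 1
  simp only [fwdDiff]
  push_cast
  ring_nf

theorem bernApprox_eq_eval_bernsteinCombination (f : ℝ → ℝ) (m : ℕ) :
    bernApprox f m = fun t => (bernsteinCombination m fun k => f (k / m)).eval t := by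
  ext t
  simp [bernApprox, bernsteinCombination, eval_finsetSum, bernsteinPolynomial, bern]

theorem bernstein_approx_convex_general (f : ℝ → ℝ) (hf : ConvexOn ℝ (Set.Icc (0:ℝ) 1) f)
    (m : ℕ) :
    ConvexOn ℝ (Set.Icc (0:ℝ) 1) (bernApprox f m) := by
  rw [bernApprox_eq_eval_bernsteinCombination]
  exact convexOn_eval_bernsteinCombination fun _ hk => hf.fwdDiff_fwdDiff_comp_div_nonneg hk

theorem bernstein_approx_convex (f : ℝ → ℝ) (hf : ConvexOn ℝ (Set.Icc (0:ℝ) 1) f)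
    (m : ℕ) (hm : 1 ≤ m) :
    ConvexOn ℝ (Set.Icc (0:ℝ) 1) (bernApprox f m) :=
  bernstein_approx_convex_general f hf m
end

section
/- Let h: (0,1) → ℝ be a nonnegative continuous integrable function satisfying ∫_0^1 (1-w) h(w) dw ≤ 1 and ∫_0^1 w h(w) dw ≤ 1. Define A(t) = 1 - ∫_0^1 min((1-t)w, t(1-w)) h(w) dw for t ∈ [0,1]. Then A is a Pickands dependence function: A is convex, A(0) = A(1) = 1, and max(t, 1-t) ≤ A(t) ≤ 1 for all t ∈ [0,1]. -/
/-- `A` is a Pickands dependence function. -/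
def IsPickands (A : ℝ → ℝ) : Prop :=
  ConvexOn ℝ (Set.Icc (0:ℝ) 1) A ∧
    ∀ t ∈ Set.Icc (0:ℝ) 1, max t (1 - t) ≤ A t ∧ A t ≤ 1

/-!
For fixed `w`, the kernel `t ↦ min ((1 - t) w, t (1 - w))` is a minimum of two affine functions,
hence concave; integrating against the nonnegative weight `h` keeps it concave, so `A` is convex.
The kernel vanishes at `t = 0` and `t = 1` and is nonnegative, giving `A(0) = A(1) = 1` and
`A ≤ 1`. Bounding the minimum by either branch and using the two moment conditions gives
`A(t) ≥ t` and `A(t) ≥ 1 - t`.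
-/

open MeasureTheory Set

theorem concaveOn_integral {E α : Type*} [AddCommGroup E] [Module ℝ E] [MeasurableSpace α]
    {μ : Measure α} {s : Set E} {f : E → α → ℝ} (hs : Convex ℝ s)
    (hf : ∀ x ∈ s, Integrable (f x) μ) (hconc : ∀ᵐ a ∂μ, ConcaveOn ℝ s (f · a)) :
    ConcaveOn ℝ s fun x => ∫ a, f x a ∂μ := by
  refine ⟨hs, fun x hx y hy a b ha hb hab => ?_⟩
  have hfx := (hf x hx).const_mul a
  have hfy := (hf y hy).const_mul b
  simp only [smul_eq_mul]
  rw [← integral_const_mul, ← integral_const_mul, ← integral_add hfx hfy]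
  refine integral_mono_ae (hfx.add hfy) (hf _ (hs hx hy ha hb hab)) ?_
  filter_upwards [hconc] with w hw
  exact hw.2 hx hy ha hb hab

theorem MeasureTheory.IntegrableOn.continuous_mul_Ioo {g φ : ℝ → ℝ} {a b : ℝ}
    (hg : IntegrableOn g (Ioo a b)) (hφ : Continuous φ) :
    IntegrableOn (fun w => φ w * g w) (Ioo a b) :=
  hg.continuousOn_mul_of_subset hφ.continuousOn isCompact_Icc measurableSet_Ioo
    Ioo_subset_Icc_self

def pickandsKernel (t w : ℝ) : ℝ := min ((1 - t) * w) (t * (1 - w))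

namespace pickandsKernel

theorem continuous (t : ℝ) : Continuous (pickandsKernel t) := by
  unfold pickandsKernel; fun_prop

theorem concaveOn (w : ℝ) : ConcaveOn ℝ univ (pickandsKernel · w) := by
  refine ⟨convex_univ, fun x _ y _ a b ha hb hab => ?_⟩
  simp only [pickandsKernel, smul_eq_mul]
  have hx := min_le_left ((1 - x) * w) (x * (1 - w))
  have hx' := min_le_right ((1 - x) * w) (x * (1 - w))
  have hy := min_le_left ((1 - y) * w) (y * (1 - w))
  have hy' := min_le_right ((1 - y) * w) (y * (1 - w))
  obtain rfl : b = 1 - a := by linarith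
  refine le_min ?_ ?_
  · nlinarith [mul_le_mul_of_nonneg_left hx ha, mul_le_mul_of_nonneg_left hy hb]
  · nlinarith [mul_le_mul_of_nonneg_left hx' ha, mul_le_mul_of_nonneg_left hy' hb]

theorem nonneg {t w : ℝ} (ht : t ∈ Icc 0 1) (hw : w ∈ Icc 0 1) : 0 ≤ pickandsKernel t w :=
  le_min (mul_nonneg (sub_nonneg.2 ht.2) hw.1) (mul_nonneg ht.1 (sub_nonneg.2 hw.2))

theorem zero_left {w : ℝ} (hw : 0 ≤ w) : pickandsKernel 0 w = 0 := by
  simp [pickandsKernel, hw]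

theorem one_left {w : ℝ} (hw : w ≤ 1) : pickandsKernel 1 w = 0 := by
  simp [pickandsKernel, hw]

end pickandsKernel

noncomputable def pickandsIntegral (h : ℝ → ℝ) (t : ℝ) : ℝ :=
  ∫ w in Ioo 0 1, pickandsKernel t w * h w

section pickandsIntegral

variable {h : ℝ → ℝ}

theorem concaveOn_pickandsIntegral (hpos : ∀ w ∈ Ioo (0:ℝ) 1, 0 ≤ h w)
    (hint : IntegrableOn h (Ioo 0 1)) : ConcaveOn ℝ univ (pickandsIntegral h) := by
  refine concaveOn_integral convex_univ (fun t _ => hint.continuous_mul_Ioo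
    (pickandsKernel.continuous t)) ?_
  filter_upwards [ae_restrict_mem measurableSet_Ioo] with w hw
  simpa only [smul_eq_mul, mul_comm (h w)] using (pickandsKernel.concaveOn w).smul (hpos w hw)

theorem pickandsIntegral_nonneg (hpos : ∀ w ∈ Ioo (0:ℝ) 1, 0 ≤ h w) {t : ℝ}
    (ht : t ∈ Icc 0 1) : 0 ≤ pickandsIntegral h t :=
  setIntegral_nonneg measurableSet_Ioo fun w hw =>
    mul_nonneg (pickandsKernel.nonneg ht (Ioo_subset_Icc_self hw)) (hpos w hw)

theorem pickandsIntegral_le_one_sub_mul (hpos : ∀ w ∈ Ioo (0:ℝ) 1, 0 ≤ h w)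
    (hint : IntegrableOn h (Ioo 0 1)) (t : ℝ) :
    pickandsIntegral h t ≤ (1 - t) * ∫ w in Ioo 0 1, w * h w := by
  rw [← integral_const_mul]
  refine setIntegral_mono_on (hint.continuous_mul_Ioo (pickandsKernel.continuous t))
    ((hint.continuous_mul_Ioo continuous_id).const_mul _) measurableSet_Ioo fun w hw => ?_
  rw [← mul_assoc]
  exact mul_le_mul_of_nonneg_right (min_le_left _ _) (hpos w hw)

theorem pickandsIntegral_le_mul (hpos : ∀ w ∈ Ioo (0:ℝ) 1, 0 ≤ h w)
    (hint : IntegrableOn h (Ioo 0 1)) (t : ℝ) :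
    pickandsIntegral h t ≤ t * ∫ w in Ioo 0 1, (1 - w) * h w := by
  rw [← integral_const_mul]
  refine setIntegral_mono_on (hint.continuous_mul_Ioo (pickandsKernel.continuous t))
    ((hint.continuous_mul_Ioo (by fun_prop)).const_mul _) measurableSet_Ioo fun w hw => ?_
  rw [← mul_assoc]
  exact mul_le_mul_of_nonneg_right (min_le_right _ _) (hpos w hw)

theorem pickandsIntegral_zero : pickandsIntegral h 0 = 0 :=
  setIntegral_eq_zero_of_forall_eq_zero fun w hw => by simp [pickandsKernel.zero_left hw.1.le]

theorem pickandsIntegral_one : pickandsIntegral h 1 = 0 :=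
  setIntegral_eq_zero_of_forall_eq_zero fun w hw => by simp [pickandsKernel.one_left hw.2.le]

end pickandsIntegral

theorem pickands_from_density_general (h : ℝ → ℝ)
    (hpos : ∀ w ∈ Set.Ioo (0:ℝ) 1, 0 ≤ h w)
    (hint : MeasureTheory.IntegrableOn h (Set.Ioo (0:ℝ) 1))
    (hb0 : (∫ w in (0:ℝ)..1, (1 - w) * h w) ≤ 1)
    (hb1 : (∫ w in (0:ℝ)..1, w * h w) ≤ 1)
    (A : ℝ → ℝ)
    (hA : ∀ t, A t = 1 - ∫ w in (0:ℝ)..1, min ((1 - t) * w) (t * (1 - w)) * h w) :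
    IsPickands A ∧ A 0 = 1 ∧ A 1 = 1 := by
  simp only [intervalIntegral.integral_of_le zero_le_one, integral_Ioc_eq_integral_Ioo]
    at hA hb0 hb1
  obtain rfl : A = fun t => 1 - pickandsIntegral h t := funext hA
  refine ⟨⟨?_, fun t ht => ⟨max_le ?_ ?_, ?_⟩⟩, ?_, ?_⟩
  · exact (convexOn_const 1 (convex_Icc 0 1)).sub
      ((concaveOn_pickandsIntegral hpos hint).subset (subset_univ _) (convex_Icc 0 1))
  · nlinarith [pickandsIntegral_le_one_sub_mul hpos hint t,
      mul_le_mul_of_nonneg_left hb1 (sub_nonneg.2 ht.2)]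
  · nlinarith [pickandsIntegral_le_mul hpos hint t, mul_le_mul_of_nonneg_left hb0 ht.1]
  · linarith [pickandsIntegral_nonneg hpos ht]
  · simp [pickandsIntegral_zero]
  · simp [pickandsIntegral_one]

theorem pickands_from_density (h : ℝ → ℝ)
    (hpos : ∀ w ∈ Set.Ioo (0:ℝ) 1, 0 ≤ h w)
    (hcont : ContinuousOn h (Set.Ioo (0:ℝ) 1))
    (hint : MeasureTheory.IntegrableOn h (Set.Ioo (0:ℝ) 1))
    (hb0 : (∫ w in (0:ℝ)..1, (1 - w) * h w) ≤ 1)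
    (hb1 : (∫ w in (0:ℝ)..1, w * h w) ≤ 1)
    (A : ℝ → ℝ)
    (hA : ∀ t, A t = 1 - ∫ w in (0:ℝ)..1, min ((1 - t) * w) (t * (1 - w)) * h w) :
    IsPickands A ∧ A 0 = 1 ∧ A 1 = 1 :=
  pickands_from_density_general h hpos hint hb0 hb1 A hA
end

section
/- Let A be a polynomial of degree at most m+2 (m ≥ 0). Then A is a Pickands dependence function if and only if: (1) c(0) = c(m+2) = 1, (2) min(c(1), c(m+1)) ≥ (m+1)/(m+2), and (3) A''(t) ≥ 0 for all t ∈ [0,1], where c(k) denote the coefficients of A in the Bernstein basis of degree m+2, i.e., A(t) = Σ_{k=0}^{m+2} c(k) b_{k,m+2}(t). -/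
open Set Filter Polynomial

noncomputable def bernsteinSum (R : Type*) [CommRing R] (n : ℕ) (c : ℕ → R) : R[X] :=
  ∑ k ∈ Finset.range (n + 1), C (c k) * bernsteinPolynomial R n k

namespace bernsteinSum

variable {R : Type*} [CommRing R]

theorem eval_zero (n : ℕ) (c : ℕ → R) : (bernsteinSum R n c).eval 0 = c 0 := by
  simp [bernsteinSum, eval_finsetSum, bernsteinPolynomial.eval_at_0]

theorem eval_one (n : ℕ) (c : ℕ → R) : (bernsteinSum R n c).eval 1 = c n := by
  simp [bernsteinSum, eval_finsetSum, bernsteinPolynomial.eval_at_1]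

theorem derivative_succ (n : ℕ) (c : ℕ → R) :
    derivative (bernsteinSum R (n + 1) c) =
      (n + 1) * bernsteinSum R n (fun k => c (k + 1) - c k) := by
  have hshift : ∑ k ∈ Finset.range (n + 1), C (c (k + 1)) * bernsteinPolynomial R n (k + 1) =
      ∑ k ∈ Finset.range (n + 1), C (c k) * bernsteinPolynomial R n k -
        C (c 0) * bernsteinPolynomial R n 0 := by
    rw [Finset.sum_range_succ, Finset.sum_range_succ' (fun k => C (c k) * _),
      bernsteinPolynomial.eq_zero_of_lt R n.lt_succ_self]
    ring
  rw [bernsteinSum, Finset.sum_range_succ', derivative_add, derivative_sum]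
  simp only [derivative_C_mul, bernsteinPolynomial.derivative_succ,
    bernsteinPolynomial.derivative_zero, add_tsub_cancel_right]
  rw [bernsteinSum]
  simp only [map_sub, sub_mul, Finset.sum_sub_distrib, mul_sub, mul_left_comm (C _),
    ← Finset.mul_sum]
  push_cast
  linear_combination (-(n + 1 : R[X])) * hshift

theorem eval_eq_sum_bern (n : ℕ) (c : ℕ → ℝ) (x : ℝ) :
    (bernsteinSum ℝ n c).eval x = ∑ k ∈ Finset.range (n + 1), c k * bern n k x := by
  simp [bernsteinSum, eval_finsetSum, bernsteinPolynomial, bern, mul_assoc]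

end bernsteinSum

theorem convexOn_Icc_iff_deriv2_nonneg {f : ℝ → ℝ} {a b : ℝ} (hab : a < b)
    (hf : Differentiable ℝ f) (hf' : Differentiable ℝ (deriv f)) :
    ConvexOn ℝ (Icc a b) f ↔ ∀ t ∈ Icc a b, 0 ≤ deriv (deriv f) t := by
  refine ⟨fun hconv t ht => ?_, fun h => ?_⟩
  · rw [← (hf' t).derivWithin (uniqueDiffOn_Icc hab t ht)]
    exact (hconv.monotoneOn_deriv fun x _ => hf x).derivWithin_nonneg
  · exact convexOn_of_deriv2_nonneg (convex_Icc a b) hf.continuous.continuousOn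
      hf.differentiableOn hf'.differentiableOn fun t ht => h t (interior_subset ht)

namespace ConvexOn

variable {f : ℝ → ℝ} {a b k : ℝ}

theorem line_le_iff_le_deriv_left (hfc : ConvexOn ℝ (Icc a b) f) (hab : a < b)
    (hf : DifferentiableAt ℝ f a) :
    (∀ t ∈ Icc a b, f a + k * (t - a) ≤ f t) ↔ k ≤ deriv f a := by
  constructor
  · intro hline
    refine ge_of_tendsto ((hasDerivWithinAt_iff_tendsto_slope' self_notMem_Ioi).mp
      hf.hasDerivAt.hasDerivWithinAt) ?_
    filter_upwards [Ioo_mem_nhdsGT hab] with t ht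
    rw [slope_def_field, le_div_iff₀ (sub_pos.2 ht.1)]
    linarith [hline t (Ioo_subset_Icc_self ht)]
  · intro hk t ht
    rcases ht.1.eq_or_lt with rfl | hat
    · simp
    have hslope := hfc.deriv_le_slope (left_mem_Icc.2 hab.le) ht hat hf
    rw [slope_def_field, le_div_iff₀ (sub_pos.2 hat)] at hslope
    linarith [mul_le_mul_of_nonneg_right hk (sub_nonneg.2 ht.1)]

theorem line_le_iff_deriv_le_right (hfc : ConvexOn ℝ (Icc a b) f) (hab : a < b)
    (hf : DifferentiableAt ℝ f b) :
    (∀ t ∈ Icc a b, f b + k * (t - b) ≤ f t) ↔ deriv f b ≤ k := by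
  constructor
  · intro hline
    refine le_of_tendsto ((hasDerivWithinAt_iff_tendsto_slope' self_notMem_Iio).mp
      hf.hasDerivAt.hasDerivWithinAt) ?_
    filter_upwards [Ioo_mem_nhdsLT hab] with t ht
    rw [slope_def_field, div_le_iff_of_neg (sub_neg.2 ht.2)]
    linarith [hline t (Ioo_subset_Icc_self ht)]
  · intro hk t ht
    rcases ht.2.eq_or_lt with rfl | htb
    · simp
    have hslope := hfc.slope_le_deriv ht (right_mem_Icc.2 hab.le) htb hf
    rw [slope_def_field, div_le_iff₀ (sub_pos.2 htb)] at hslope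
    linarith [mul_le_mul_of_nonneg_right hk (sub_nonneg.2 ht.2)]

end ConvexOn

theorem isPickands_iff_of_differentiable {A : ℝ → ℝ} (hA : Differentiable ℝ A) (hA' : Differentiable ℝ (deriv A)) :
    IsPickands A ↔ A 0 = 1 ∧ A 1 = 1 ∧ -1 ≤ deriv A 0 ∧ deriv A 1 ≤ 1 ∧
      ∀ t ∈ Icc (0:ℝ) 1, 0 ≤ deriv (deriv A) t := by
  have h01 : (0:ℝ) < 1 := zero_lt_one
  constructor
  · rintro ⟨hconv, hbound⟩
    have h0 : A 0 = 1 := by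
      have := hbound 0 (left_mem_Icc.2 h01.le)
      norm_num at this
      exact le_antisymm this.2 this.1
    have h1 : A 1 = 1 := by
      have := hbound 1 (right_mem_Icc.2 h01.le)
      norm_num at this
      exact le_antisymm this.2 this.1
    refine ⟨h0, h1, ?_, ?_, (convexOn_Icc_iff_deriv2_nonneg h01 hA hA').1 hconv⟩
    · refine (hconv.line_le_iff_le_deriv_left h01 (hA 0)).1 fun t ht => ?_
      linarith [le_max_right t (1 - t), (hbound t ht).1]
    · refine (hconv.line_le_iff_deriv_le_right h01 (hA 1)).1 fun t ht => ?_
      linarith [le_max_left t (1 - t), (hbound t ht).1]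
  · rintro ⟨h0, h1, hd0, hd1, hd2⟩
    have hconv := (convexOn_Icc_iff_deriv2_nonneg h01 hA hA').2 hd2
    refine ⟨hconv, fun t ht => ⟨max_le ?_ ?_, ?_⟩⟩
    · linarith [(hconv.line_le_iff_deriv_le_right h01 (hA 1)).2 hd1 t ht]
    · linarith [(hconv.line_le_iff_le_deriv_left h01 (hA 0)).2 hd0 t ht]
    · have := hconv.le_on_segment (left_mem_Icc.2 h01.le) (right_mem_Icc.2 h01.le)
        (by rwa [segment_eq_Icc h01.le])
      rwa [h0, h1, max_self] at this

theorem pickands_polynomial_characterization (m : ℕ) (c : ℕ → ℝ) (A : ℝ → ℝ)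
    (hA : ∀ t, A t = ∑ k ∈ Finset.range (m + 3), c k * bern (m + 2) k t) :
    IsPickands A ↔
      (c 0 = 1 ∧ c (m + 2) = 1 ∧
        ((m : ℝ) + 1) / ((m : ℝ) + 2) ≤ min (c 1) (c (m + 1)) ∧
        ∀ t ∈ Set.Icc (0:ℝ) 1, 0 ≤ deriv (deriv A) t) := by
  set P := bernsteinSum ℝ (m + 2) c
  have hAP : A = fun t => P.eval t := funext fun t => by rw [hA, bernsteinSum.eval_eq_sum_bern]
  have hdA : deriv A = fun t => (derivative P).eval t := by rw [hAP]; funext t; exact P.deriv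
  have hd0 : deriv A 0 = (m + 2) * (c 1 - c 0) := by
    simp only [hdA, P, bernsteinSum.derivative_succ, eval_mul, eval_add, eval_natCast, eval_one,
      bernsteinSum.eval_zero]
    push_cast; ring
  have hd1 : deriv A 1 = (m + 2) * (c (m + 2) - c (m + 1)) := by
    simp only [hdA, P, bernsteinSum.derivative_succ, eval_mul, eval_add, eval_natCast, eval_one,
      bernsteinSum.eval_one]
    push_cast; ring
  rw [isPickands_iff_of_differentiable (hAP ▸ P.differentiable) (hdA ▸ (derivative P).differentiable), hd0, hd1]
  simp only [hAP, P, bernsteinSum.eval_zero, bernsteinSum.eval_one]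
  rw [le_min_iff, div_le_iff₀ (by positivity), div_le_iff₀ (by positivity)]
  constructor
  · rintro ⟨h0, h1, hder0, hder1, hd2⟩
    exact ⟨h0, h1, ⟨by rw [h0] at hder0; linarith, by rw [h1] at hder1; linarith⟩, hd2⟩
  · rintro ⟨h0, h1, ⟨hc1, hcm⟩, hd2⟩
    exact ⟨h0, h1, by rw [h0]; linarith, by rw [h1]; linarith, hd2⟩
end

section
/- A polynomial A of degree at most 2, written in the Bernstein basis as A(t) = c_0 b_{0,2}(t) + c_1 b_{1,2}(t) + c_2 b_{2,2}(t), is a Pickands dependence function if and only if c_0 = c_2 = 1 and 1/2 ≤ c_1 ≤ 1. -/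
/-!
The endpoint conditions `A 0 = A 1 = 1` force `c₀ = c₂ = 1`, and then
`A t = 1 - k t (1 - t)` with `k = 2 (1 - c₁)`. Such a parabola is convex and bounded by `1`
on `[0, 1]` exactly when `k ≥ 0`, and the factorisation `A t - t = (1 - t) (1 - k t)`
(together with the symmetry `t ↦ 1 - t`) shows `A ≥ max t (1 - t)` exactly when `k ≤ 1`.
-/

open Set

theorem IsPickands.apply_zero {A : ℝ → ℝ} (h : IsPickands A) : A 0 = 1 :=
  le_antisymm (h.2 0 (by simp)).2 (by simpa using (h.2 0 (by simp)).1)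

theorem IsPickands.apply_one {A : ℝ → ℝ} (h : IsPickands A) : A 1 = 1 :=
  le_antisymm (h.2 1 (by simp)).2 (by simpa using (h.2 1 (by simp)).1)

theorem convexOn_one_sub_mul_mul_one_sub {k : ℝ} (hk : 0 ≤ k) :
    ConvexOn ℝ univ fun t : ℝ ↦ 1 - k * (t * (1 - t)) := by
  refine ⟨convex_univ, fun x _ y _ a b ha hb hab ↦ ?_⟩
  obtain rfl : b = 1 - a := by linarith
  simp only [smul_eq_mul]
  -- the convexity defect is `k a b (x - y)²`
  nlinarith [mul_nonneg (mul_nonneg hk (mul_nonneg ha hb)) (sq_nonneg (x - y))]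

theorem isPickands_one_sub_mul_mul_one_sub_iff (k : ℝ) :
    IsPickands (fun t ↦ 1 - k * (t * (1 - t))) ↔ 0 ≤ k ∧ k ≤ 1 := by
  have hfactor : ∀ t : ℝ, 1 - k * (t * (1 - t)) - t = (1 - t) * (1 - k * t) := fun t ↦ by ring
  constructor
  · rintro ⟨-, hbd⟩
    refine ⟨?_, ?_⟩
    · have hmid := (hbd (1 / 2) (by norm_num)).2
      nlinarith
    · by_contra! hk
      -- a point just beyond the root `1 / k` of `1 - k t`
      set t := (k + 1) / (2 * k) with ht
      have hkt : k * t = (k + 1) / 2 := by rw [ht]; field_simp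
      have ht1 : 1 - t = (k - 1) / (2 * k) := by rw [ht]; field_simp; ring
      have ht0 : 0 < 1 - t := by rw [ht1]; exact div_pos (by linarith) (by linarith)
      have hmem : t ∈ Icc (0 : ℝ) 1 := ⟨by rw [ht]; positivity, by linarith⟩
      have hle := (le_max_left _ _).trans (hbd t hmem).1
      nlinarith [hfactor t, mul_neg_of_pos_of_neg ht0 (show 1 - k * t < 0 by linarith)]
  · rintro ⟨hk0, hk1⟩
    refine ⟨(convexOn_one_sub_mul_mul_one_sub hk0).subset (subset_univ _) (convex_Icc 0 1),
      fun t ⟨ht0, ht1⟩ ↦ ⟨max_le ?_ ?_, ?_⟩⟩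
    · nlinarith [hfactor t, mul_nonneg (sub_nonneg.2 ht1) (show 0 ≤ 1 - k * t by nlinarith)]
    · nlinarith [hfactor (1 - t), mul_nonneg ht0 (show 0 ≤ 1 - k * (1 - t) by nlinarith)]
    · nlinarith [mul_nonneg hk0 (mul_nonneg ht0 (sub_nonneg.2 ht1))]

theorem pickands_degree_two (c₀ c₁ c₂ : ℝ) (A : ℝ → ℝ)
    (hA : ∀ t, A t = c₀ * bern 2 0 t + c₁ * bern 2 1 t + c₂ * bern 2 2 t) :
    IsPickands A ↔ (c₀ = 1 ∧ c₂ = 1 ∧ 1 / 2 ≤ c₁ ∧ c₁ ≤ 1) := by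
  have hA₀ : A 0 = c₀ := by simp [hA, bern]
  have hA₁ : A 1 = c₂ := by simp [hA, bern]
  have hsymm : c₀ = 1 → c₂ = 1 → A = fun t ↦ 1 - 2 * (1 - c₁) * (t * (1 - t)) := by
    rintro rfl rfl
    funext t
    norm_num [hA, bern]
    ring
  constructor
  · intro h
    have hc₀ : c₀ = 1 := hA₀ ▸ h.apply_zero
    have hc₂ : c₂ = 1 := hA₁ ▸ h.apply_one
    rw [hsymm hc₀ hc₂, isPickands_one_sub_mul_mul_one_sub_iff] at h
    exact ⟨hc₀, hc₂, by linarith, by linarith⟩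
  · rintro ⟨hc₀, hc₂, hlo, hhi⟩
    rw [hsymm hc₀ hc₂, isPickands_one_sub_mul_mul_one_sub_iff]
    constructor <;> linarith
end

section
/- A polynomial h of degree at most 2, written in the Bernstein basis as h(t) = c_0 b_{0,2}(t) + c_1 b_{1,2}(t) + c_2 b_{2,2}(t), is nonnegative on [0,1] if and only if c_0 ≥ 0, c_2 ≥ 0, and c_1 ≥ -sqrt(c_0 c_2). -/
/-!
Homogenizing with `u = 1 - t`, `v = t`, the polynomial is the binary quadratic form
`c₀ u² + 2 c₁ u v + c₂ v²`, and nonnegativity on `[0, 1]` is nonnegativity of this form on the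
quadrant `u, v ≥ 0` (copositivity). Writing the form as `(√c₀ u - √c₂ v)² + 2 (c₁ + √(c₀ c₂)) u v`
gives sufficiency; for necessity, evaluating at `(u, v) = (c₂ - c₁, c₀ - c₁)` yields
`(c₀ c₂ - c₁²)(c₀ + c₂ - 2 c₁)`, whose second factor is positive when `c₁ < 0`.
-/

open Set

theorem binaryQuadForm_nonneg_on_quadrant_iff_segment (a b c : ℝ) :
    (∀ u v : ℝ, 0 ≤ u → 0 ≤ v → 0 ≤ a * u ^ 2 + 2 * b * u * v + c * v ^ 2) ↔
      ∀ t ∈ Icc (0 : ℝ) 1, 0 ≤ a * (1 - t) ^ 2 + 2 * b * (1 - t) * t + c * t ^ 2 := by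
  refine ⟨fun H t ht => H _ _ (sub_nonneg.2 ht.2) ht.1, fun H u v hu hv => ?_⟩
  rcases (add_nonneg hu hv).eq_or_lt with hsum | hsum
  · obtain ⟨rfl, rfl⟩ : u = 0 ∧ v = 0 := ⟨by linarith, by linarith⟩
    simp
  have hv_le : v / (u + v) ≤ 1 := (div_le_one hsum).2 (by linarith)
  have hseg := H (v / (u + v)) ⟨div_nonneg hv hsum.le, hv_le⟩
  have hscale : a * u ^ 2 + 2 * b * u * v + c * v ^ 2 = (u + v) ^ 2 *
      (a * (1 - v / (u + v)) ^ 2 + 2 * b * (1 - v / (u + v)) * (v / (u + v)) +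
        c * (v / (u + v)) ^ 2) := by
    field_simp
    ring
  rw [hscale]
  positivity

theorem binaryQuadForm_nonneg_on_quadrant_iff (a b c : ℝ) :
    (∀ u v : ℝ, 0 ≤ u → 0 ≤ v → 0 ≤ a * u ^ 2 + 2 * b * u * v + c * v ^ 2) ↔
      0 ≤ a ∧ 0 ≤ c ∧ -√(a * c) ≤ b := by
  constructor
  · intro H
    have ha : 0 ≤ a := by simpa using H 1 0 zero_le_one le_rfl
    have hc : 0 ≤ c := by simpa using H 0 1 le_rfl zero_le_one
    refine ⟨ha, hc, ?_⟩
    rcases le_or_gt 0 b with hb | hb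
    · linarith [Real.sqrt_nonneg (a * c)]
    have hdisc : b ^ 2 ≤ a * c := by
      have hval := H (c - b) (a - b) (by linarith) (by linarith)
      have hfactor : a * (c - b) ^ 2 + 2 * b * (c - b) * (a - b) + c * (a - b) ^ 2 =
          (a * c - b ^ 2) * (a + c - 2 * b) := by ring
      rw [hfactor] at hval
      nlinarith
    linarith [neg_le_abs b, Real.abs_le_sqrt hdisc]
  · rintro ⟨ha, hc, hb⟩ u v hu hv
    have hsos : a * u ^ 2 + 2 * b * u * v + c * v ^ 2 =
        (√a * u - √c * v) ^ 2 + 2 * (b + √(a * c)) * u * v := by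
      rw [Real.sqrt_mul ha]
      linear_combination -(u ^ 2) * Real.sq_sqrt ha - v ^ 2 * Real.sq_sqrt hc
    rw [hsos]
    have : 0 ≤ b + √(a * c) := by linarith
    positivity

theorem quadratic_nonneg_characterization (c₀ c₁ c₂ : ℝ) (h : ℝ → ℝ)
    (hh : ∀ t, h t = c₀ * (1 - t) ^ 2 + c₁ * (2 * t * (1 - t)) + c₂ * t ^ 2) :
    (∀ t ∈ Set.Icc (0:ℝ) 1, 0 ≤ h t) ↔
      (0 ≤ c₀ ∧ 0 ≤ c₂ ∧ -Real.sqrt (c₀ * c₂) ≤ c₁) := by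
  have hform : ∀ t, h t = c₀ * (1 - t) ^ 2 + 2 * c₁ * (1 - t) * t + c₂ * t ^ 2 := fun t => by
    rw [hh]
    ring
  simp only [hform]
  rw [← binaryQuadForm_nonneg_on_quadrant_iff_segment, binaryQuadForm_nonneg_on_quadrant_iff]
end
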